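/- Minimal atomic representation in the Hamburger TMP: If β = (β_0,...,β_{2k}) ∈ ℝ^{2k+1} with β_0 > 0 has a representing measure on ℝ, then it has a representing measure consisting of exactly rank β atoms, where rank β is k+1 if A_β is invertible and otherwise the minimal index i with the i-th column of A_β dependent on the preceding columns. -/

import Mathlib

open Matrix

/-- The (k+1)×(k+1) Hankel matrix of a sequence β = (β₀,...,β₂ₖ). -/
def hankel {k : ℕ} (β : Fin (2*k+1) → ℝ) : Matrix (Fin (k+1)) (Fin (k+1)) ℝ :=
  fun i j => β ⟨i.1 + j.1, by have := i.2; have := j.2; omega⟩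

/-- The leading principal (j+1)×(j+1) submatrix A(j) of a (k+1)×(k+1) matrix, j ≤ k. -/
def leadSub {k : ℕ} (A : Matrix (Fin (k+1)) (Fin (k+1)) ℝ) (j : ℕ) (h : j ≤ k) :
    Matrix (Fin (j+1)) (Fin (j+1)) ℝ :=
  A.submatrix (Fin.castLE (by omega)) (Fin.castLE (by omega))

/-- The leading principal r×r submatrix of a (k+1)×(k+1) matrix, r ≤ k+1. -/
def leadSq {k : ℕ} (A : Matrix (Fin (k+1)) (Fin (k+1)) ℝ) (r : ℕ) (h : r ≤ k+1) :
    Matrix (Fin r) (Fin r) ℝ :=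
  A.submatrix (Fin.castLE h) (Fin.castLE h)

/-- The rank of a sequence via its Hankel matrix: k+1 if the matrix is nonsingular, and
otherwise the least index i whose column lies in the span of the preceding columns. -/
noncomputable def hankelRank {k : ℕ} (A : Matrix (Fin (k+1)) (Fin (k+1)) ℝ) : ℕ :=
  if A.det ≠ 0 then k+1
  else sInf {i : ℕ | ∃ h : i < k+1,
    (fun r => A r ⟨i, h⟩) ∈ Submodule.span ℝ
      {c : Fin (k+1) → ℝ | ∃ j : Fin (k+1), j.1 < i ∧ c = fun r => A r j}}

/-- The truncation (β₀,...,β₂₍ₖ₋₁₎) of (β₀,...,β₂ₖ). -/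
def trunc {k : ℕ} (β : Fin (2*k+1) → ℝ) : Fin (2*(k-1)+1) → ℝ :=
  fun i => β ⟨i.1, by have := i.2; omega⟩
open Matrix MeasureTheory

/-- β = (β₀,...,β₂ₖ) admits a representing measure on ℝ: a positive Borel measure whose
power moments up to degree 2k match β. -/
def HasRep (k : ℕ) (β : Fin (2*k+1) → ℝ) : Prop :=
  ∃ μ : Measure ℝ,
    (∀ i : Fin (2*k+1), Integrable (fun x : ℝ => x ^ (i : ℕ)) μ) ∧
    ∀ i : Fin (2*k+1), β i = ∫ x, x ^ (i : ℕ) ∂μ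

/-!
Let `L` be the moment functional `p ↦ ∑ βᵢ pᵢ` on `ℝ[X]` and `μ` a representing measure, so that
`L p = ∫ p dμ` whenever `deg p ≤ 2k`. Since `vᵀ A_β v = ∫ (∑ vⱼ xʲ)² dμ`, a vector `v` lies in the
kernel of `A_β` iff the polynomial `∑ vⱼ Xʲ` vanishes `μ`-a.e.; hence column `i` of `A_β` depends
on the earlier columns iff some monic polynomial of degree `i` vanishes `μ`-a.e.

If `A_β` is singular, some nonzero polynomial of degree `≤ k` vanishes `μ`-a.e., so `μ` is carried
by finitely many points of positive mass. Every polynomial vanishing `μ`-a.e. vanishes at each of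
them, and `∏ (X - a)` over them vanishes `μ`-a.e., so the rank is the number of these atoms and `μ`
itself is the required measure.

If `A_β` is invertible, `L (p * p) > 0` for every nonzero `p` of degree `≤ k`, and Gaussian
quadrature applies. A monic `P` of degree `k + 1` that is `L`-orthogonal to all polynomials of
degree `< k` has `k + 1` distinct real roots: otherwise `P = ((X - a) ^ 2 + c) * g` with `c ≥ 0` and
`deg g = k - 1`, and `0 = L (P * g) = L (((X - a) * g) ^ 2) + c * L (g ^ 2) > 0`. Division by `P`
shows that the weights `L ℓⱼ` of the Lagrange basis at these roots integrate every polynomial of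
degree `≤ 2k` exactly; applied to `ℓⱼ ^ 2` this gives `L ℓⱼ = L (ℓⱼ ^ 2) > 0`.
-/

open Polynomial

theorem Polynomial.exists_sq_add_dvd_of_card_roots_toFinset_lt {P : ℝ[X]} (hP : P ≠ 0)
    (h : P.roots.toFinset.card < P.natDegree) :
    ∃ a c : ℝ, 0 ≤ c ∧ (X - C a) ^ 2 + C c ∣ P := by
  classical
  by_cases hsplit : Multiset.card P.roots < P.natDegree
  · -- `P = Q * R` with `Q` the product over the real roots, so that `R` has no real root.
    obtain ⟨R, hPR⟩ := prod_multiset_X_sub_C_dvd P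
    set Q := (P.roots.map fun a => X - C a).prod
    have hQR : Q * R ≠ 0 := hPR ▸ hP
    have hRroots : R.roots = 0 := by
      have := roots_mul hQR
      rw [← hPR, roots_multiset_prod_X_sub_C] at this
      simpa using this
    have hRdeg : 0 < R.natDegree := by
      have := natDegree_mul (left_ne_zero_of_mul hQR) (right_ne_zero_of_mul hQR)
      rw [← hPR, natDegree_multiset_prod_X_sub_C_eq_card] at this
      omega
    obtain ⟨z, hz⟩ :=
      IsAlgClosed.exists_aeval_eq_zero ℂ R (natDegree_pos_iff_degree_pos.1 hRdeg).ne'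
    by_cases him : z.im = 0
    · have hre : R.IsRoot z.re := by
        have : z = algebraMap ℝ ℂ z.re := Complex.ext rfl (by simpa using him)
        rw [this, aeval_algebraMap_apply, aeval_def, Algebra.algebraMap_self, eval₂_id] at hz
        simpa using hz
      exact absurd (hRroots ▸ (mem_roots (right_ne_zero_of_mul hQR)).2 hre)
        (Multiset.notMem_zero _)
    · refine ⟨z.re, z.im ^ 2, sq_nonneg _, dvd_trans ?_ (hPR ▸ dvd_mul_left R Q)⟩
      convert R.quadratic_dvd_of_aeval_eq_zero_im_ne_zero hz him using 1
      rw [Complex.sq_norm, Complex.normSq_apply]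
      simp only [map_add, map_mul, map_pow, C_ofNat]
      ring
  · have hnd : ¬ P.roots.Nodup := fun hnd => by
      rw [Multiset.toFinset_card_of_nodup hnd] at h
      exact hsplit h
    obtain ⟨a, ha⟩ : ∃ a, 1 < P.roots.count a := by
      simpa [Multiset.nodup_iff_count_le_one] using hnd
    refine ⟨a, 0, le_rfl, ?_⟩
    rw [C_0, add_zero, ← le_rootMultiplicity_iff hP, ← count_roots]
    exact ha

theorem LinearMap.apply_eq_sum_coeff_smul_X_pow {M : Type*} [AddCommMonoid M] [Module ℝ M]
    (Λ : ℝ[X] →ₗ[ℝ] M) {n : ℕ} {p : ℝ[X]} (hp : p.natDegree < n) :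
    Λ p = ∑ i : Fin n, p.coeff i • Λ (X ^ (i : ℕ)) := by
  conv_lhs => rw [p.as_sum_range_C_mul_X_pow' hp, map_sum]
  rw [← Fin.sum_univ_eq_sum_range (fun i => Λ (C (p.coeff i) * X ^ i))]
  simp only [C_mul', map_smul]

theorem MeasureTheory.of_ae_of_measure_singleton_ne_zero {α : Type*} [MeasurableSpace α]
    {μ : Measure α} {P : α → Prop} (h : ∀ᵐ x ∂μ, P x) {a : α} (ha : μ {a} ≠ 0) : P a := by
  by_contra hPa
  exact ha (measure_mono_null (by simpa using hPa) (ae_iff.1 h))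

theorem MeasureTheory.integral_eq_sum_of_ae_mem {α : Type*} [MeasurableSpace α]
    [MeasurableSingletonClass α] {μ : Measure α} {T : Finset α} (hT : ∀ᵐ x ∂μ, x ∈ T)
    {f : α → ℝ} (hf : Integrable f μ) : ∫ x, f x ∂μ = ∑ a ∈ T, μ.real {a} * f a := by
  calc ∫ x, f x ∂μ = ∫ x in T, f x ∂μ := by rw [Measure.restrict_eq_self_of_ae_mem hT]
    _ = ∑ a ∈ T, μ.real {a} * f a := setIntegral_finset T hf.integrableOn

theorem Polynomial.exists_finset_ae_mem_of_ae_eval_eq_zero {μ : Measure ℝ} {p : ℝ[X]}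
    (hp : p ≠ 0) (h : ∀ᵐ x ∂μ, p.eval x = 0) :
    ∃ T : Finset ℝ, T.card ≤ p.natDegree ∧ (∀ᵐ x ∂μ, x ∈ T) ∧ ∀ a ∈ T, μ {a} ≠ 0 := by
  classical
  refine ⟨p.roots.toFinset.filter (μ {·} ≠ 0), ?_, ?_, fun a ha => (Finset.mem_filter.1 ha).2⟩
  · exact (Finset.card_filter_le _ _).trans ((Multiset.toFinset_card_le _).trans (card_roots' p))
  · have hnull : ∀ a ∈ p.roots.toFinset.filter (μ {·} = 0), ∀ᵐ x ∂μ, x ≠ a :=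
      fun a ha => by simpa [ae_iff] using (Finset.mem_filter.1 ha).2
    filter_upwards [h, (Finset.eventually_all _).2 hnull] with x hx hxnull
    have hroot : x ∈ p.roots.toFinset := by simp [hp, hx]
    exact Finset.mem_filter.2 ⟨hroot, fun hx0 => hxnull x (Finset.mem_filter.2 ⟨hroot, hx0⟩) rfl⟩

section GaussQuadrature

variable (L : ℝ[X] →ₗ[ℝ] ℝ) {k : ℕ}

theorem exists_monic_orthogonal_degreeLT
    (hpos : ∀ f : ℝ[X], f ≠ 0 → f.natDegree ≤ k → 0 < L (f * f)) :
    ∃ P : ℝ[X], P.Monic ∧ P.natDegree = k + 1 ∧ ∀ g ∈ degreeLT ℝ k, L (P * g) = 0 := by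
  let V := degreeLT ℝ k
  let B : V →ₗ[ℝ] Module.Dual ℝ V :=
    ((LinearMap.mul ℝ ℝ[X]).compl₁₂ V.subtype V.subtype).compr₂ L
  have hBinj : Function.Injective B := by
    rw [← LinearMap.ker_eq_bot, LinearMap.ker_eq_bot']
    intro f hf
    by_contra hf0
    have hdeg : (f : ℝ[X]).natDegree ≤ k :=
      (natDegree_lt_iff_degree_lt (by simpa using hf0)).2 (mem_degreeLT.1 f.2) |>.le
    exact (hpos f (by simpa using hf0) hdeg).ne' (LinearMap.congr_fun hf f)
  -- `r` is the orthogonal projection of `X ^ (k + 1)` onto `degreeLT ℝ k` for `⟨f, g⟩ = L (f * g)`.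
  obtain ⟨r, hr⟩ := (LinearMap.injective_iff_surjective_of_finrank_eq_finrank
    Subspace.dual_finrank_eq.symm).1 hBinj (L ∘ₗ LinearMap.mulLeft ℝ (X ^ (k + 1)) ∘ₗ V.subtype)
  have hr_deg : (r : ℝ[X]).degree < (X ^ (k + 1) : ℝ[X]).degree := by
    rw [degree_X_pow]
    exact (mem_degreeLT.1 r.2).trans (by exact_mod_cast k.lt_succ_self)
  refine ⟨X ^ (k + 1) - (r : ℝ[X]), (monic_X_pow _).sub_of_left hr_deg, ?_, fun g hg => ?_⟩
  · rw [natDegree_eq_of_degree_eq (degree_sub_eq_left_of_degree_lt hr_deg), natDegree_X_pow]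
  · have := LinearMap.congr_fun hr ⟨g, hg⟩
    simp only [B, LinearMap.compr₂_apply, LinearMap.compl₁₂_apply, LinearMap.mul_apply',
      LinearMap.comp_apply, LinearMap.mulLeft_apply, Submodule.subtype_apply] at this
    rw [sub_mul, map_sub, this, sub_self]

theorem exists_injective_isRoot_of_orthogonal_degreeLT
    (hpos : ∀ f : ℝ[X], f ≠ 0 → f.natDegree ≤ k → 0 < L (f * f))
    {P : ℝ[X]} (hP : P.Monic) (hdeg : P.natDegree = k + 1)
    (horth : ∀ g ∈ degreeLT ℝ k, L (P * g) = 0) :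
    ∃ x : Fin (k + 1) → ℝ, Function.Injective x ∧ ∀ j, P.IsRoot (x j) := by
  classical
  have hcard : P.roots.toFinset.card = k + 1 := by
    refine le_antisymm ((Multiset.toFinset_card_le _).trans (hdeg ▸ card_roots' P))
      (not_lt.1 fun hlt => ?_)
    obtain ⟨a, c, hc, g, rfl⟩ :=
      exists_sq_add_dvd_of_card_roots_toFinset_lt hP.ne_zero (hdeg ▸ hlt)
    set h : ℝ[X] := (X - C a) ^ 2 + C c
    have hlt : (C c).degree < ((X - C a) ^ 2).degree :=
      degree_C_le.trans_lt (by rw [degree_pow, degree_X_sub_C]; norm_num)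
    have hh : h.Monic := ((monic_X_sub_C a).pow 2).add_of_left hlt
    have hhdeg : h.natDegree = 2 := by
      rw [natDegree_add_eq_left_of_degree_lt hlt, natDegree_pow, natDegree_X_sub_C]
    have hg : g.Monic := hh.of_mul_monic_left hP
    have hgdeg : g.natDegree + 1 = k := by
      rw [hh.natDegree_mul hg, hhdeg] at hdeg
      omega
    have hXg : ((X - C a) * g).natDegree = k := by
      rw [(monic_X_sub_C a).natDegree_mul hg, natDegree_X_sub_C]
      omega
    have hsos : h * g * g = ((X - C a) * g) * ((X - C a) * g) + C c * (g * g) := by ring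
    have hzero := horth g (mem_degreeLT.2 ((natDegree_lt_iff_degree_lt hg.ne_zero).1 (by omega)))
    rw [hsos, map_add, C_mul', map_smul, smul_eq_mul] at hzero
    have h1 := hpos _ ((monic_X_sub_C a).mul hg).ne_zero hXg.le
    have h2 := hpos g hg.ne_zero (by omega)
    linarith [mul_nonneg hc h2.le]
  let x := P.roots.toFinset.orderEmbOfFin hcard
  exact ⟨x, x.injective, fun j =>
    (mem_roots hP.ne_zero).1 (Multiset.mem_toFinset.1 (Finset.orderEmbOfFin_mem _ hcard j))⟩

theorem eq_sum_lagrangeBasis_of_orthogonal_degreeLT {P : ℝ[X]} (hP : P.Monic)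
    (hdeg : P.natDegree = k + 1) (horth : ∀ g ∈ degreeLT ℝ k, L (P * g) = 0)
    {x : Fin (k + 1) → ℝ} (hx : Function.Injective x) (hroot : ∀ j, P.IsRoot (x j))
    {f : ℝ[X]} (hf : f.natDegree ≤ 2 * k) :
    L f = ∑ j, L (Lagrange.basis Finset.univ x j) * f.eval (x j) := by
  have hdiv : f /ₘ P ∈ degreeLT ℝ k := by
    rw [mem_degreeLT]
    by_cases hq : f /ₘ P = 0
    · rw [hq, degree_zero]
      exact WithBot.bot_lt_coe _
    · have hPf : P.degree ≤ f.degree := not_lt.1 fun h => hq ((divByMonic_eq_zero_iff hP).2 h)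
      have := hdeg ▸ natDegree_le_natDegree hPf
      rw [degree_eq_natDegree hq, natDegree_divByMonic f hP, hdeg]
      exact_mod_cast (by omega : f.natDegree - (k + 1) < k)
  have hmod : f %ₘ P = Lagrange.interpolate Finset.univ x fun j => f.eval (x j) := by
    refine Lagrange.eq_interpolate_of_eval_eq _ hx.injOn ?_ fun j _ => ?_
    · rw [Finset.card_univ, Fintype.card_fin, ← hdeg, ← degree_eq_natDegree hP.ne_zero]
      exact degree_modByMonic_lt f hP
    · have := congrArg (eval (x j)) (modByMonic_add_div f P)
      rwa [eval_add, eval_mul, (hroot j).eq_zero, zero_mul, add_zero] at this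
  calc L f = L (f %ₘ P) + L (P * (f /ₘ P)) := by rw [← map_add, modByMonic_add_div]
    _ = ∑ j, L (Lagrange.basis Finset.univ x j) * f.eval (x j) := by
      rw [horth _ hdiv, add_zero, hmod, Lagrange.interpolate_apply, map_sum]
      refine Finset.sum_congr rfl fun j _ => ?_
      rw [C_mul', map_smul, smul_eq_mul, mul_comm]

theorem exists_gaussQuadrature
    (hpos : ∀ f : ℝ[X], f ≠ 0 → f.natDegree ≤ k → 0 < L (f * f)) :
    ∃ (x : Fin (k + 1) → ℝ) (ρ : Fin (k + 1) → ℝ), Function.Injective x ∧ (∀ j, 0 < ρ j) ∧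
      ∀ f : ℝ[X], f.natDegree ≤ 2 * k → L f = ∑ j, ρ j * f.eval (x j) := by
  obtain ⟨P, hP, hPdeg, horth⟩ := exists_monic_orthogonal_degreeLT L hpos
  obtain ⟨x, hx, hroot⟩ := exists_injective_isRoot_of_orthogonal_degreeLT L hpos hP hPdeg horth
  have hquad (f : ℝ[X]) (hf : f.natDegree ≤ 2 * k) :=
    eq_sum_lagrangeBasis_of_orthogonal_degreeLT L hP hPdeg horth hx hroot hf
  refine ⟨x, fun j => L (Lagrange.basis Finset.univ x j), hx, fun j => ?_, hquad⟩
  set ℓ := Lagrange.basis Finset.univ x j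
  have hℓ0 : ℓ ≠ 0 := Lagrange.basis_ne_zero hx.injOn (Finset.mem_univ j)
  have hℓdeg : ℓ.natDegree = k := by simp [ℓ, Lagrange.natDegree_basis hx.injOn]
  have hℓℓ := hquad (ℓ * ℓ) (by rw [natDegree_mul hℓ0 hℓ0]; omega)
  rw [Finset.sum_eq_single j (fun i _ hij => by
      rw [eval_mul, Lagrange.eval_basis_of_ne (Ne.symm hij) (Finset.mem_univ i), zero_mul,
        mul_zero]) (by simp),
    eval_mul, Lagrange.eval_basis_self hx.injOn (Finset.mem_univ j), mul_one, mul_one] at hℓℓ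
  exact (hpos _ hℓ0 hℓdeg.le).trans_eq hℓℓ

end GaussQuadrature

noncomputable def momentFunctional {n : ℕ} (β : Fin n → ℝ) : ℝ[X] →ₗ[ℝ] ℝ :=
  ∑ i, β i • lcoeff ℝ i

theorem momentFunctional_apply {n : ℕ} (β : Fin n → ℝ) (p : ℝ[X]) :
    momentFunctional β p = ∑ i, β i * p.coeff i := by
  simp [momentFunctional]

theorem momentFunctional_X_pow {n : ℕ} (β : Fin n → ℝ) (i : Fin n) :
    momentFunctional β (X ^ (i : ℕ)) = β i := by
  simp [momentFunctional, coeff_X_pow, Fin.val_eq_val]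

noncomputable def shiftedMoments {k : ℕ} (β : Fin (2 * k + 1) → ℝ) :
    ℝ[X] →ₗ[ℝ] Fin (k + 1) → ℝ :=
  LinearMap.pi fun r => momentFunctional β ∘ₗ LinearMap.mulLeft ℝ (X ^ (r : ℕ))

section Hankel

variable {k : ℕ} {β : Fin (2 * k + 1) → ℝ}

theorem shiftedMoments_apply (p : ℝ[X]) (r : Fin (k + 1)) :
    shiftedMoments β p r = momentFunctional β (X ^ (r : ℕ) * p) := rfl

theorem hankel_apply_eq_momentFunctional (r j : Fin (k + 1)) :
    hankel β r j = momentFunctional β (X ^ (r : ℕ) * X ^ (j : ℕ)) := by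
  rw [← pow_add]
  exact (momentFunctional_X_pow β ⟨r + j, by omega⟩).symm

theorem hankel_mulVec_coeff {p : ℝ[X]} (hp : p.natDegree ≤ k) :
    hankel β *ᵥ (fun j : Fin (k + 1) => p.coeff j) = shiftedMoments β p := by
  ext r
  change _ = (momentFunctional β ∘ₗ LinearMap.mulLeft ℝ (X ^ (r : ℕ))) p
  rw [LinearMap.apply_eq_sum_coeff_smul_X_pow _ (Nat.lt_succ_of_le hp)]
  simp [mulVec, dotProduct, hankel_apply_eq_momentFunctional, mul_comm]

theorem momentFunctional_mul_eq_sum {p : ℝ[X]} (hp : p.natDegree ≤ k) (q : ℝ[X]) :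
    momentFunctional β (p * q) = ∑ j : Fin (k + 1), p.coeff j * shiftedMoments β q j := by
  change (momentFunctional β ∘ₗ LinearMap.mulRight ℝ q) p = _
  rw [LinearMap.apply_eq_sum_coeff_smul_X_pow _ (Nat.lt_succ_of_le hp)]
  simp [shiftedMoments_apply, mul_comm]

end Hankel

def IsRepresentingMeasure {n : ℕ} (β : Fin n → ℝ) (μ : Measure ℝ) : Prop :=
  (∀ i : Fin n, Integrable (fun x : ℝ => x ^ (i : ℕ)) μ) ∧ ∀ i : Fin n, β i = ∫ x, x ^ (i : ℕ) ∂μ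

namespace IsRepresentingMeasure

section

variable {n : ℕ} {β : Fin n → ℝ} {μ : Measure ℝ}

theorem isFiniteMeasure (hμ : IsRepresentingMeasure β μ) (hn : 0 < n) : IsFiniteMeasure μ :=
  (integrable_const_iff_isFiniteMeasure one_ne_zero).1 (by simpa using hμ.1 ⟨0, hn⟩)

theorem integrable_eval (hμ : IsRepresentingMeasure β μ) {p : ℝ[X]} (hp : p.natDegree < n) :
    Integrable (fun x => p.eval x) μ := by
  simp_rw [eval_eq_sum_range' hp]
  exact integrable_finsetSum _ fun i hi => (hμ.1 ⟨i, Finset.mem_range.1 hi⟩).const_mul _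

theorem integral_eval (hμ : IsRepresentingMeasure β μ) {p : ℝ[X]} (hp : p.natDegree < n) :
    ∫ x, p.eval x ∂μ = momentFunctional β p := by
  simp_rw [eval_eq_sum_range' hp, ← Fin.sum_univ_eq_sum_range (fun i => p.coeff i * _ ^ i)]
  rw [integral_finsetSum _ fun i _ => (hμ.1 i).const_mul _, momentFunctional_apply]
  exact Finset.sum_congr rfl fun i _ => by rw [integral_const_mul, hμ.2, mul_comm]

theorem exists_atomic_of_ae_mem (hμ : IsRepresentingMeasure β μ) [IsFiniteMeasure μ]
    {T : Finset ℝ} (hT : ∀ᵐ x ∂μ, x ∈ T) (hTpos : ∀ a ∈ T, μ {a} ≠ 0) :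
    ∃ (x : Fin T.card → ℝ) (ρ : Fin T.card → ℝ), Function.Injective x ∧ (∀ j, 0 < ρ j) ∧
      ∀ i : Fin n, β i = ∑ j, ρ j * x j ^ (i : ℕ) := by
  let x := T.orderEmbOfFin rfl
  refine ⟨x, fun j => μ.real {x j}, x.injective, fun j => ?_, fun i => ?_⟩
  · exact ENNReal.toReal_pos (hTpos _ (T.orderEmbOfFin_mem rfl j)) (measure_ne_top μ _)
  · rw [hμ.2 i, integral_eq_sum_of_ae_mem hT (hμ.1 i)]
    conv_lhs => rw [← Finset.image_orderEmbOfFin_univ T rfl]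
    exact Finset.sum_image fun _ _ _ _ h => x.injective h

end

variable {k : ℕ} {β : Fin (2 * k + 1) → ℝ} {μ : Measure ℝ}

theorem momentFunctional_mul_self_eq_integral (hμ : IsRepresentingMeasure β μ) {p : ℝ[X]}
    (hp : p.natDegree ≤ k) : momentFunctional β (p * p) = ∫ x, p.eval x * p.eval x ∂μ := by
  rw [← hμ.integral_eval ((natDegree_mul_le_of_le hp hp).trans_lt (by omega))]
  simp_rw [eval_mul]

theorem ae_eval_eq_zero_of_momentFunctional_mul_self (hμ : IsRepresentingMeasure β μ)
    {p : ℝ[X]} (hp : p.natDegree ≤ k) (h : momentFunctional β (p * p) = 0) :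
    ∀ᵐ x ∂μ, p.eval x = 0 := by
  have hint : Integrable (fun x => p.eval x * p.eval x) μ := by
    simpa using hμ.integrable_eval ((natDegree_mul_le_of_le hp hp).trans_lt (by omega))
  rw [hμ.momentFunctional_mul_self_eq_integral hp,
    integral_eq_zero_iff_of_nonneg (fun x => mul_self_nonneg _) hint] at h
  filter_upwards [h] with x hx
  exact mul_self_eq_zero.1 hx

theorem shiftedMoments_eq_zero_iff (hμ : IsRepresentingMeasure β μ) {p : ℝ[X]}
    (hp : p.natDegree ≤ k) : shiftedMoments β p = 0 ↔ ∀ᵐ x ∂μ, p.eval x = 0 := by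
  refine ⟨fun h => hμ.ae_eval_eq_zero_of_momentFunctional_mul_self hp ?_, fun h => ?_⟩
  · simp [momentFunctional_mul_eq_sum hp, h]
  · ext r
    have hdeg : (X ^ (r : ℕ) * p).natDegree < 2 * k + 1 :=
      (natDegree_mul_le_of_le (natDegree_X_pow_le _) hp).trans_lt (by omega)
    rw [shiftedMoments_apply, ← hμ.integral_eval hdeg, Pi.zero_apply]
    refine integral_eq_zero_of_ae ?_
    filter_upwards [h] with x hx
    simp [hx]

theorem hankel_det_eq_zero_iff (hμ : IsRepresentingMeasure β μ) :
    (hankel β).det = 0 ↔ ∃ p : ℝ[X], p ≠ 0 ∧ p.natDegree ≤ k ∧ ∀ᵐ x ∂μ, p.eval x = 0 := by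
  classical
  rw [← exists_mulVec_eq_zero_iff]
  constructor
  · rintro ⟨v, hv, hAv⟩
    set p := (degreeLTEquiv ℝ (k + 1)).symm v
    have hcoeff : (fun j : Fin (k + 1) => (p : ℝ[X]).coeff j) = v :=
      (degreeLTEquiv ℝ (k + 1)).apply_symm_apply v
    have hpk : (p : ℝ[X]).natDegree ≤ k :=
      natDegree_le_of_degree_le (mem_degreeLE.1 ((degreeLT_succ_eq_degreeLE (R := ℝ)) ▸ p.2))
    refine ⟨p, fun h => hv ?_, hpk, (hμ.shiftedMoments_eq_zero_iff hpk).1 ?_⟩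
    · rw [← hcoeff, h]
      rfl
    · rwa [← hankel_mulVec_coeff hpk, hcoeff]
  · rintro ⟨p, hp0, hpk, hpμ⟩
    refine ⟨fun j => p.coeff j, fun h => hp0 ?_, ?_⟩
    · ext i
      by_cases hi : i ≤ k
      · exact congr_fun h ⟨i, by omega⟩
      · exact coeff_eq_zero_of_natDegree_lt (by omega)
    · rw [hankel_mulVec_coeff hpk, (hμ.shiftedMoments_eq_zero_iff hpk).2 hpμ]

theorem momentFunctional_mul_self_pos (hμ : IsRepresentingMeasure β μ)
    (hdet : (hankel β).det ≠ 0) {p : ℝ[X]} (hp : p ≠ 0) (hpk : p.natDegree ≤ k) :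
    0 < momentFunctional β (p * p) := by
  refine lt_of_le_of_ne ?_ fun h => hdet (hμ.hankel_det_eq_zero_iff.2
    ⟨p, hp, hpk, hμ.ae_eval_eq_zero_of_momentFunctional_mul_self hpk h.symm⟩)
  rw [hμ.momentFunctional_mul_self_eq_integral hpk]
  exact integral_nonneg fun x => mul_self_nonneg _

theorem hankel_col_mem_span_iff (hμ : IsRepresentingMeasure β μ) {i : ℕ} (hi : i < k + 1) :
    (fun r => hankel β r ⟨i, hi⟩) ∈ Submodule.span ℝ
      {c : Fin (k + 1) → ℝ | ∃ j : Fin (k + 1), j.1 < i ∧ c = fun r => hankel β r j} ↔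
    ∃ p : ℝ[X], p.Monic ∧ p.natDegree = i ∧ ∀ᵐ x ∂μ, p.eval x = 0 := by
  classical
  have hcol (j : Fin (k + 1)) : (fun r => hankel β r j) = shiftedMoments β (X ^ (j : ℕ)) :=
    funext fun r => hankel_apply_eq_momentFunctional r j
  have hspan : Submodule.span ℝ
      {c : Fin (k + 1) → ℝ | ∃ j : Fin (k + 1), j.1 < i ∧ c = fun r => hankel β r j} =
      (degreeLT ℝ i).map (shiftedMoments β) := by
    rw [degreeLT_eq_span_X_pow, Submodule.map_span]
    congr 1
    ext c
    simp only [Set.mem_ofPred_eq, Finset.coe_image, Finset.coe_range, Set.image_image,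
      Set.mem_image, Set.mem_Iio]
    constructor
    · rintro ⟨j, hj, rfl⟩
      exact ⟨j, hj, (hcol j).symm⟩
    · rintro ⟨n, hn, rfl⟩
      exact ⟨⟨n, by omega⟩, hn, (hcol ⟨n, by omega⟩).symm⟩
  rw [hspan, hcol, Submodule.mem_map]
  constructor
  · rintro ⟨q, hq, hqX⟩
    have hlt : q.degree < (X ^ i : ℝ[X]).degree := by rwa [degree_X_pow, ← mem_degreeLT]
    have hdeg : (X ^ i - q).natDegree = i := by
      rw [natDegree_eq_of_degree_eq (degree_sub_eq_left_of_degree_lt hlt), natDegree_X_pow]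
    refine ⟨X ^ i - q, (monic_X_pow i).sub_of_left hlt, hdeg,
      (hμ.shiftedMoments_eq_zero_iff (by omega)).1 ?_⟩
    rw [map_sub, hqX, sub_self]
  · rintro ⟨p, hp, hpi, hpμ⟩
    refine ⟨X ^ i - p, mem_degreeLT.2 ?_, ?_⟩
    · have hdeg : p.degree = i := by rw [degree_eq_natDegree hp.ne_zero, hpi]
      exact hdeg ▸ degree_sub_lt_right (by rw [degree_X_pow, hdeg]) hp.ne_zero
        (by rw [leadingCoeff_X_pow, hp.leadingCoeff])
    · rw [map_sub, (hμ.shiftedMoments_eq_zero_iff (by omega)).2 hpμ, sub_zero]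

theorem hankelRank_eq_card (hμ : IsRepresentingMeasure β μ) (hdet : (hankel β).det = 0)
    {T : Finset ℝ} (hT : ∀ᵐ x ∂μ, x ∈ T) (hTpos : ∀ a ∈ T, μ {a} ≠ 0) (hTk : T.card ≤ k) :
    hankelRank (hankel β) = T.card := by
  have hmem : ∃ h : T.card < k + 1, (fun r => hankel β r ⟨T.card, h⟩) ∈ Submodule.span ℝ
      {c | ∃ j : Fin (k + 1), j.1 < T.card ∧ c = fun r => hankel β r j} := by
    refine ⟨by omega, (hμ.hankel_col_mem_span_iff _).2 ⟨∏ a ∈ T, (X - C a),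
      monic_prod_of_monic _ _ fun a _ => monic_X_sub_C a,
      natDegree_finsetProd_X_sub_C_eq_card T id, ?_⟩⟩
    filter_upwards [hT] with x hx
    rw [eval_prod]
    exact Finset.prod_eq_zero hx (by simp)
  rw [hankelRank, if_neg (not_not.2 hdet)]
  refine le_antisymm (Nat.sInf_le hmem) (le_csInf ⟨_, hmem⟩ fun i ⟨hi, hspan⟩ => ?_)
  obtain ⟨p, hp, hpi, hpμ⟩ := (hμ.hankel_col_mem_span_iff hi).1 hspan
  have hTroots : T ⊆ p.roots.toFinset := fun a ha => by
    simpa [hp.ne_zero] using of_ae_of_measure_singleton_ne_zero hpμ (hTpos a ha)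
  exact hpi ▸ (Finset.card_le_card hTroots).trans
    ((Multiset.toFinset_card_le _).trans (card_roots' p))

end IsRepresentingMeasure

theorem stmt13 {k : ℕ} (β : Fin (2*k+1) → ℝ)
    (h : HasRep k β) :
    ∃ (x : Fin (hankelRank (hankel β)) → ℝ) (ρ : Fin (hankelRank (hankel β)) → ℝ),
      Function.Injective x ∧ (∀ j, 0 < ρ j) ∧
      ∀ i : Fin (2*k+1), β i = ∑ j, ρ j * x j ^ (i : ℕ) := by
  obtain ⟨μ, hμ⟩ : ∃ μ, IsRepresentingMeasure β μ := h
  by_cases hdet : (hankel β).det = 0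
  · obtain ⟨p, hp0, hpk, hpμ⟩ := hμ.hankel_det_eq_zero_iff.1 hdet
    obtain ⟨T, hTp, hT, hTpos⟩ := exists_finset_ae_mem_of_ae_eval_eq_zero hp0 hpμ
    have := hμ.isFiniteMeasure (Nat.succ_pos _)
    rw [hμ.hankelRank_eq_card hdet hT hTpos (hTp.trans hpk)]
    exact hμ.exists_atomic_of_ae_mem hT hTpos
  · rw [hankelRank, if_pos hdet]
    obtain ⟨x, ρ, hx, hρ, hquad⟩ :=
      exists_gaussQuadrature (momentFunctional β) fun p => hμ.momentFunctional_mul_self_pos hdet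
    refine ⟨x, ρ, hx, hρ, fun i => ?_⟩
    rw [← momentFunctional_X_pow β i, hquad _ ((natDegree_X_pow_le _).trans (by omega))]
    simp
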